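/- arXiv:1512.07641 — 4 statements merged into one kernel-verified Lean document; each statement's English description precedes it below -/
import Mathlib

section
/- For every real ε, the integral over the circle satisfies ∫_{𝕋} log|cos(2π(θ + iε))| dθ = 2π|ε| − log 2. -/
/-!
With `z = e^{2πiθ}` and `α = e^{2πε}` one has
`cos (2π(θ + iε)) = e^{-2πε} z⁻¹ (z - iα) (z + iα) / 2`, so off the countably many zeros of
the integrand, `log |cos (2π(θ + iε))| = -2πε - log 2 + log |z - iα| + log |z + iα|`.
Integrating over `θ ∈ [0, 1]` is averaging over the unit circle, where each of the last two
terms averages to `log⁺ α = max 0 (2πε)` (Jensen), and `-2πε + 2 max 0 (2πε) = 2π|ε|`.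
-/

open MeasureTheory Real intervalIntegral
open Complex (I)

theorem circleAverage_eq_integral_zero_one {E : Type*} [NormedAddCommGroup E] [NormedSpace ℝ E]
    (f : ℂ → E) (c : ℂ) (R : ℝ) :
    circleAverage f c R = ∫ θ in (0:ℝ)..1, f (circleMap c R (2 * π * θ)) := by
  rw [circleAverage_def, integral_comp_mul_left (fun θ ↦ f (circleMap c R θ)) (by positivity),
    mul_zero, mul_one]

theorem circleIntegrable_log_norm_add_const (a c : ℂ) (R : ℝ) :
    CircleIntegrable (log ‖· + a‖) c R := by
  simpa using circleIntegrable_log_norm_sub_const (a := -a) (c := c) R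

theorem circleAverage_log_norm_sub_add_log_norm_add (a : ℂ) :
    circleAverage (fun z ↦ log ‖z - a‖ + log ‖z + a‖) 0 1 = 2 * log⁺ ‖a‖ := by
  rw [circleAverage_fun_add (circleIntegrable_log_norm_sub_const 1)
      (circleIntegrable_log_norm_add_const a 0 1),
    circleAverage_log_norm_sub_const_eq_posLog, circleAverage_log_norm_add_const_eq_posLog, two_mul]

theorem cos_two_pi_mul_eq_mul_circleMap (θ ε : ℝ) :
    Complex.cos (2 * π * (θ + ε * I)) =
      exp (-(2 * π * ε)) / 2 * (circleMap 0 1 (2 * π * θ))⁻¹ *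
        ((circleMap 0 1 (2 * π * θ) - exp (2 * π * ε) * I) *
          (circleMap 0 1 (2 * π * θ) + exp (2 * π * ε) * I)) := by
  have h1 : 2 * π * ((θ : ℂ) + ε * I) * I = 2 * π * θ * I + -(2 * π * ε) := by
    ring_nf; rw [Complex.I_sq]; ring
  have h2 : -(2 * π * ((θ : ℂ) + ε * I)) * I = -(2 * π * θ * I) + 2 * π * ε := by
    ring_nf; rw [Complex.I_sq]; ring
  rw [circleMap_zero, Complex.cos, h1, h2, Complex.exp_add, Complex.exp_add]
  push_cast
  simp only [Complex.exp_neg]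
  field_simp
  ring_nf
  rw [Complex.I_sq]
  ring

theorem log_norm_cos_two_pi_mul {θ ε : ℝ} (h : Complex.cos (2 * π * (θ + ε * I)) ≠ 0) :
    log ‖Complex.cos (2 * π * (θ + ε * I))‖ =
      -(2 * π * ε) - log 2 +
        (log ‖circleMap 0 1 (2 * π * θ) - exp (2 * π * ε) * I‖ +
          log ‖circleMap 0 1 (2 * π * θ) + exp (2 * π * ε) * I‖) := by
  rw [cos_two_pi_mul_eq_mul_circleMap] at h ⊢
  obtain ⟨-, hprod⟩ := mul_ne_zero_iff.mp h
  obtain ⟨hsub, hadd⟩ := mul_ne_zero_iff.mp hprod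
  rw [norm_mul, norm_mul, norm_inv, norm_circleMap_zero, norm_div, Complex.norm_real,
    Complex.norm_two, norm_of_nonneg (exp_nonneg _), abs_one, inv_one, mul_one,
    log_mul (by positivity) (by simpa using hprod), norm_mul,
    log_mul (norm_ne_zero_iff.mpr hsub) (norm_ne_zero_iff.mpr hadd),
    log_div (exp_ne_zero _) two_ne_zero, log_exp]

theorem countable_setOf_cos_two_pi_mul_eq_zero (ε : ℝ) :
    {θ : ℝ | Complex.cos (2 * π * (θ + ε * I)) = 0}.Countable := by
  refine (Set.countable_range fun k : ℤ ↦ (2 * k + 1 : ℝ) / 4).mono fun θ hθ ↦ ?_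
  obtain ⟨k, hk⟩ := Complex.cos_eq_zero_iff.mp hθ
  have hre : 2 * π * θ = (2 * k + 1) * π / 2 := by simpa using congrArg Complex.re hk
  exact ⟨k, mul_left_cancel₀ pi_ne_zero (by linarith)⟩

theorem neg_add_two_mul_posLog_exp (x : ℝ) : -x + 2 * log⁺ (exp x) = |x| := by
  rw [posLog_apply, log_exp]
  rcases le_total 0 x with hx | hx
  · rw [max_eq_right hx, abs_of_nonneg hx]; ring
  · rw [max_eq_left hx, abs_of_nonpos hx]; ring

theorem integral_log_abs_complex_cos (ε : ℝ) :
    ∫ θ in (0:ℝ)..1,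
        Real.log ‖Complex.cos (2 * Real.pi * ((θ : ℂ) + (ε : ℂ) * Complex.I))‖ =
      2 * Real.pi * |ε| - Real.log 2 := by
  set a : ℂ := exp (2 * π * ε) * I
  set g : ℂ → ℝ := fun z ↦ -(2 * π * ε) - log 2 + (log ‖z - a‖ + log ‖z + a‖)
  have hcos : ∀ᵐ θ : ℝ, θ ∉ {θ : ℝ | Complex.cos (2 * π * (θ + ε * I)) = 0} :=
    (countable_setOf_cos_two_pi_mul_eq_zero ε).ae_notMem volume
  have hnorm_a : ‖a‖ = exp (2 * π * ε) := by
    rw [norm_mul, Complex.norm_I, mul_one, Complex.norm_real, norm_of_nonneg (exp_nonneg _)]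
  calc ∫ θ in (0:ℝ)..1, log ‖Complex.cos (2 * π * (θ + ε * I))‖
      = ∫ θ in (0:ℝ)..1, g (circleMap 0 1 (2 * π * θ)) :=
        integral_congr_ae (hcos.mono fun θ h _ ↦ log_norm_cos_two_pi_mul h)
    _ = circleAverage g 0 1 := (circleAverage_eq_integral_zero_one g 0 1).symm
    _ = -(2 * π * ε) - log 2 + 2 * log⁺ (exp (2 * π * ε)) := by
        rw [circleAverage_fun_add (circleIntegrable_const _ _ _)
            ((circleIntegrable_log_norm_sub_const 1).fun_add
              (circleIntegrable_log_norm_add_const a 0 1)),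
          circleAverage_const, circleAverage_log_norm_sub_add_log_norm_add, hnorm_a]
    _ = 2 * π * |ε| - log 2 := by
        have h := neg_add_two_mul_posLog_exp (2 * π * ε)
        rw [abs_mul, abs_of_pos two_pi_pos] at h
        linarith
end

section
/- Let (k_n) be a sequence of positive integers with k_n → ∞. For positive integers m, l, set E_{m,l} = {θ ∈ 𝕋 : ‖k_l θ‖_{ℝ/ℤ} < 1/(4m)}, where ‖·‖_{ℝ/ℤ} denotes distance to the nearest integer. Then the set E = ⋂_{m ≥ 1} ⋃_{N ≥ 1} ⋂_{l ≥ N} E_{m,l} has Lebesgue measure zero. -/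
open MeasureTheory Filter

/-! Multiplication by a nonzero integer preserves Haar measure on the circle, so every
`E_{m,l}` has measure at most `1/(2m)`; by continuity from below the same bound holds for
`⋃ N, ⋂ l ≥ N, E_{m,l} ⊇ E`. Letting `m → ∞` gives `μ E = 0`. -/

theorem AddCircle.volume_setOf_norm_nsmul_lt_le {T : ℝ} [Fact (0 < T)] {n : ℕ} (hn : n ≠ 0)
    (δ : ℝ) : volume {θ : AddCircle T | ‖n • θ‖ < δ} ≤ ENNReal.ofReal (2 * δ) := by
  have hmp : MeasurePreserving (fun θ : AddCircle T => (n : ℤ) • θ) volume volume :=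
    Measure.measurePreserving_zsmul volume (by exact_mod_cast hn)
  have hpre : {θ : AddCircle T | ‖n • θ‖ < δ} = (fun θ => (n : ℤ) • θ) ⁻¹' Metric.ball 0 δ := by
    ext θ
    simp [natCast_zsmul]
  rw [hpre, hmp.measure_preimage Metric.isOpen_ball.measurableSet.nullMeasurableSet]
  calc volume (Metric.ball (0 : AddCircle T) δ)
      ≤ volume (Metric.closedBall (0 : AddCircle T) δ) := measure_mono Metric.ball_subset_closedBall
    _ = ENNReal.ofReal (min T (2 * δ)) := AddCircle.volume_closedBall (T := T) δ
    _ ≤ ENNReal.ofReal (2 * δ) := ENNReal.ofReal_le_ofReal (min_le_right _ _)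

theorem measure_iUnion_iInter_le_of_forall_le {α : Type*} [MeasurableSpace α] {μ : Measure α}
    {s : ℕ → Set α} {c : ENNReal} (h : ∀ n, μ (s n) ≤ c) : μ (⋃ N, ⋂ n ≥ N, s n) ≤ c := by
  have hmono : Monotone fun N => ⋂ n ≥ N, s n :=
    fun _ _ hNM => Set.biInter_mono (fun _ hn => hNM.trans hn) fun _ _ => le_rfl
  rw [hmono.directed_le.measure_iUnion]
  exact iSup_le fun N => (measure_mono (Set.biInter_subset_of_mem le_rfl)).trans (h N)

theorem badPhases_measure_zero_general (k : ℕ → ℕ) (hpos : ∀ n, 0 < k n) :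
    volume {θ : AddCircle (1:ℝ) |
        ∀ m : ℕ, 0 < m → ∃ N : ℕ, 0 < N ∧ ∀ l : ℕ, N ≤ l →
          ‖(k l) • θ‖ < 1 / (4 * m)} = 0 := by
  set E := {θ : AddCircle (1:ℝ) |
        ∀ m : ℕ, 0 < m → ∃ N : ℕ, 0 < N ∧ ∀ l : ℕ, N ≤ l → ‖(k l) • θ‖ < 1 / (4 * m)}
  refine le_antisymm (ge_of_tendsto' ENNReal.tendsto_inv_nat_nhds_zero fun m => ?_) bot_le
  rcases m.eq_zero_or_pos with rfl | hm
  · simp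
  have hE : E ⊆ ⋃ N, ⋂ l ≥ N, {θ | ‖(k l) • θ‖ < 1 / (4 * m)} := fun θ hθ => by
    obtain ⟨N, -, hN⟩ := hθ m hm
    exact Set.mem_iUnion.2 ⟨N, Set.mem_iInter₂.2 hN⟩
  calc volume E ≤ ENNReal.ofReal (2 * (1 / (4 * m))) :=
        (measure_mono hE).trans <| measure_iUnion_iInter_le_of_forall_le fun l =>
          AddCircle.volume_setOf_norm_nsmul_lt_le (hpos l).ne' _
    _ ≤ (m : ENNReal)⁻¹ := by
        rw [← ENNReal.ofReal_natCast, ← ENNReal.ofReal_inv_of_pos (by positivity)]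
        apply ENNReal.ofReal_le_ofReal
        have : (0 : ℝ) < m := by positivity
        field_simp
        linarith

theorem badPhases_measure_zero (k : ℕ → ℕ) (hpos : ∀ n, 0 < k n)
    (htop : Tendsto k atTop atTop) :
    volume {θ : AddCircle (1:ℝ) |
        ∀ m : ℕ, 0 < m → ∃ N : ℕ, 0 < N ∧ ∀ l : ℕ, N ≤ l →
          ‖(k l) • θ‖ < 1 / (4 * m)} = 0 :=
  badPhases_measure_zero_general k hpos
end

section
/- Suppose B : 𝕋 → M₂(ℂ) is measurable with ‖B(·)‖ ∈ L²(𝕋), det B(x) = d ≠ 0 for a.e. x, and D is a constant 2×2 unitary diagonal matrix. Define M_k(x) = B(x + kβ) D^k B(x)⁻¹ and Φ_k(x) = tr M_k(x) − tr(B(x) D^k B(x)⁻¹). Then ‖Φ_k‖²_{L¹(𝕋)} ≤ (4/|d|²) · ∫_𝕋 ‖B(x + kβ) − B(x)‖² dx · ∫_𝕋 ‖B(x)‖² dx. -/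
/-!
On the full-measure set where `det B x = d`, the inverse of a `2 × 2` matrix is its adjugate
divided by the determinant, and the adjugate `J Bᵀ J⁻¹` (`J` the rotation by `π/2`) has the same
operator norm as `B`, so `‖B(x)⁻¹‖ = ‖B(x)‖ / |d|`. By linearity of the trace,
`Φ_k(x) = tr((B(x + kβ) - B(x)) D^k B(x)⁻¹)`, and `|tr E| ≤ 2‖E‖` gives
`|Φ_k(x)| ≤ (2 / |d|) ‖B(x + kβ) - B(x)‖ ‖B(x)‖`. Integrating and applying Cauchy–Schwarz gives the
bound.
-/

open MeasureTheory

/-- The operator norm of a `2 × 2` complex matrix, induced by the Euclidean norm on `ℂ²`. -/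
noncomputable def opNorm2 (A : Matrix (Fin 2) (Fin 2) ℂ) : ℝ :=
  ‖Matrix.toEuclideanCLM (𝕜 := ℂ) A‖

open scoped Matrix.Norms.L2Operator

namespace Matrix

variable {𝕜 : Type*} [RCLike 𝕜] {m n : Type*} [Fintype m] [Fintype n]

lemma norm_entry_le_l2_opNorm [DecidableEq n] (A : Matrix m n 𝕜) (i : m) (j : n) :
    ‖A i j‖ ≤ ‖A‖ := by
  have h := A.l2_opNorm_mulVec (PiLp.single 2 j 1)
  rw [PiLp.norm_single, norm_one, mul_one] at h
  refine le_trans (le_of_eq ?_) ((PiLp.norm_apply_le _ i).trans h)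
  simp

lemma norm_trace_le_card_mul_l2_opNorm [DecidableEq n] (A : Matrix n n 𝕜) :
    ‖A.trace‖ ≤ Fintype.card n * ‖A‖ :=
  calc ‖A.trace‖ ≤ ∑ i, ‖A i i‖ := norm_sum_le _ _
    _ ≤ ∑ _i : n, ‖A‖ := Finset.sum_le_sum fun i _ => A.norm_entry_le_l2_opNorm i i
    _ = Fintype.card n * ‖A‖ := by simp

lemma norm_trace_mul_inv_sub_le [DecidableEq n] (A C U : Matrix n n 𝕜) :
    ‖(A * U * C⁻¹).trace - (C * U * C⁻¹).trace‖ ≤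
      Fintype.card n * (‖A - C‖ * ‖U‖ * ‖C⁻¹‖) := by
  rw [← trace_sub, ← sub_mul, ← sub_mul]
  refine (norm_trace_le_card_mul_l2_opNorm _).trans (mul_le_mul_of_nonneg_left ?_ (by positivity))
  exact (l2_opNorm_mul _ _).trans (mul_le_mul_of_nonneg_right (l2_opNorm_mul _ _) (norm_nonneg _))

lemma l2_opNorm_transpose_le [DecidableEq m] [DecidableEq n] (A : Matrix m n 𝕜) :
    ‖Aᵀ‖ ≤ ‖A‖ := by
  rw [l2_opNorm_def]
  refine ContinuousLinearMap.opNorm_le_bound _ (norm_nonneg A) fun x => ?_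
  -- `Aᵀ x` is the complex conjugate of `Aᴴ x̄`, and conjugation preserves the Euclidean norm.
  have h := Aᴴ.l2_opNorm_mulVec (WithLp.toLp 2 (star (WithLp.ofLp x)))
  rw [l2_opNorm_conjTranspose] at h
  convert h using 1
  · simp [EuclideanSpace.norm_eq, ← star_vecMul, mulVec_transpose]
  · simp [EuclideanSpace.norm_eq]

lemma l2_opNorm_transpose [DecidableEq m] [DecidableEq n] (A : Matrix m n 𝕜) : ‖Aᵀ‖ = ‖A‖ :=
  le_antisymm A.l2_opNorm_transpose_le (by simpa using Aᵀ.l2_opNorm_transpose_le)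

lemma rotation_fin_two_mem_unitary :
    (!![0, -1; 1, 0] : Matrix (Fin 2) (Fin 2) 𝕜) ∈ unitary (Matrix (Fin 2) (Fin 2) 𝕜) := by
  rw [Unitary.mem_iff]
  constructor <;> ext i j <;> fin_cases i <;> fin_cases j <;>
    simp [mul_apply, Fin.sum_univ_two, star_eq_conjTranspose]

lemma adjugate_fin_two_eq_rotation_conj (A : Matrix (Fin 2) (Fin 2) 𝕜) :
    A.adjugate = !![0, -1; 1, 0] * Aᵀ * star !![0, -1; 1, 0] := by
  ext i j
  fin_cases i <;> fin_cases j <;>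
    simp [adjugate_fin_two, mul_apply, vecMul, dotProduct, Fin.sum_univ_two, star_eq_conjTranspose]

lemma l2_opNorm_adjugate_fin_two (A : Matrix (Fin 2) (Fin 2) 𝕜) : ‖A.adjugate‖ = ‖A‖ := by
  rw [adjugate_fin_two_eq_rotation_conj,
    CStarRing.norm_mul_mem_unitary (E := Matrix (Fin 2) (Fin 2) 𝕜) _
      (Unitary.star_mem rotation_fin_two_mem_unitary),
    CStarRing.norm_mem_unitary_mul (E := Matrix (Fin 2) (Fin 2) 𝕜) _ rotation_fin_two_mem_unitary,
    l2_opNorm_transpose]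

-- Also true when `det A = 0`: both sides are then `0` by the junk values of `⁻¹` and `/`.
lemma l2_opNorm_inv_fin_two (A : Matrix (Fin 2) (Fin 2) 𝕜) : ‖A⁻¹‖ = ‖A‖ / ‖A.det‖ := by
  rw [inv_def, Ring.inverse_eq_inv', norm_smul, norm_inv, l2_opNorm_adjugate_fin_two,
    inv_mul_eq_div]

lemma norm_trace_mul_inv_sub_le_fin_two (A C U : Matrix (Fin 2) (Fin 2) 𝕜) (hU : ‖U‖ ≤ 1) :
    ‖(A * U * C⁻¹).trace - (C * U * C⁻¹).trace‖ ≤ 2 / ‖C.det‖ * (‖A - C‖ * ‖C‖) := by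
  refine (norm_trace_mul_inv_sub_le A C U).trans ?_
  rw [l2_opNorm_inv_fin_two, Fintype.card_fin, Nat.cast_ofNat,
    show (2 : ℝ) * (‖A - C‖ * ‖U‖ * (‖C‖ / ‖C.det‖)) = 2 / ‖C.det‖ * (‖A - C‖ * ‖C‖) * ‖U‖ by ring]
  exact mul_le_of_le_one_right (by positivity) hU

lemma measurable_l2_opNorm {α : Type*} [MeasurableSpace α] [MeasurableSpace 𝕜] [BorelSpace 𝕜]
    [DecidableEq n] {M : α → Matrix m n 𝕜} (hM : ∀ i j, Measurable fun x => M x i j) :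
    Measurable fun x => ‖M x‖ := by
  have hcont : Continuous fun A : m → n → 𝕜 => ‖Matrix.of A‖ := continuous_norm.comp continuous_id
  exact hcont.measurable.comp (measurable_pi_lambda _ fun i => measurable_pi_lambda _ (hM i))

end Matrix

section Integral

variable {α : Type*} [MeasurableSpace α] {μ : Measure α}

lemma sq_integral_mul_le_of_nonneg {f g : α → ℝ} (hf₀ : 0 ≤ᵐ[μ] f) (hg₀ : 0 ≤ᵐ[μ] g)
    (hf : MemLp f 2 μ) (hg : MemLp g 2 μ) :
    (∫ x, f x * g x ∂μ) ^ 2 ≤ (∫ x, f x ^ 2 ∂μ) * ∫ x, g x ^ 2 ∂μ := by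
  have h := integral_mul_le_Lp_mul_Lq_of_nonneg Real.HolderConjugate.two_two hf₀ hg₀
    (by simpa using hf) (by simpa using hg)
  simp only [Real.rpow_two] at h
  have hfg : 0 ≤ ∫ x, f x * g x ∂μ :=
    integral_nonneg_of_ae (by filter_upwards [hf₀, hg₀] with x hfx hgx using mul_nonneg hfx hgx)
  calc (∫ x, f x * g x ∂μ) ^ 2
      ≤ ((∫ x, f x ^ 2 ∂μ) ^ (1 / 2 : ℝ) * (∫ x, g x ^ 2 ∂μ) ^ (1 / 2 : ℝ)) ^ 2 :=
        pow_le_pow_left₀ hfg h 2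
    _ = (∫ x, f x ^ 2 ∂μ) * ∫ x, g x ^ 2 ∂μ := by
        rw [mul_pow, ← Real.sqrt_eq_rpow, ← Real.sqrt_eq_rpow,
          Real.sq_sqrt (integral_nonneg fun x => sq_nonneg _),
          Real.sq_sqrt (integral_nonneg fun x => sq_nonneg _)]

lemma sq_integral_norm_le_of_le_mul {E : Type*} [NormedAddCommGroup E] {h : α → E}
    {f g : α → ℝ} {c : ℝ} (hf₀ : 0 ≤ᵐ[μ] f) (hg₀ : 0 ≤ᵐ[μ] g)
    (hf : MemLp f 2 μ) (hg : MemLp g 2 μ) (hh : ∀ᵐ x ∂μ, ‖h x‖ ≤ c * (f x * g x)) :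
    (∫ x, ‖h x‖ ∂μ) ^ 2 ≤ c ^ 2 * (∫ x, f x ^ 2 ∂μ) * ∫ x, g x ^ 2 ∂μ := by
  have hint : ∫ x, ‖h x‖ ∂μ ≤ c * ∫ x, f x * g x ∂μ := by
    rw [← integral_const_mul]
    exact integral_mono_of_nonneg (.of_forall fun x => norm_nonneg _)
      ((hf.integrable_mul hg).const_mul c) hh
  calc (∫ x, ‖h x‖ ∂μ) ^ 2 ≤ (c * ∫ x, f x * g x ∂μ) ^ 2 :=
        pow_le_pow_left₀ (integral_nonneg fun x => norm_nonneg _) hint 2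
    _ = c ^ 2 * (∫ x, f x * g x ∂μ) ^ 2 := mul_pow _ _ _
    _ ≤ c ^ 2 * (∫ x, f x ^ 2 ∂μ) * ∫ x, g x ^ 2 ∂μ := by
        rw [mul_assoc]
        exact mul_le_mul_of_nonneg_left (sq_integral_mul_le_of_nonneg hf₀ hg₀ hf hg) (sq_nonneg c)

lemma memLp_norm_comp_sub {E : Type*} [NormedAddCommGroup E] {p : ENNReal} {F : α → E}
    {T : α → α} (hT : MeasurePreserving T μ μ) (hF : MemLp (fun x => ‖F x‖) p μ)
    (hmeas : AEStronglyMeasurable (fun x => ‖F (T x) - F x‖) μ) :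
    MemLp (fun x => ‖F (T x) - F x‖) p μ :=
  ((hF.comp_measurePreserving hT).add hF).of_le hmeas <| .of_forall fun x => by
    simpa [abs_of_nonneg (add_nonneg (norm_nonneg (F (T x))) (norm_nonneg (F x)))]
      using norm_sub_le (F (T x)) (F x)

end Integral

lemma opNorm2_eq_l2_opNorm (A : Matrix (Fin 2) (Fin 2) ℂ) : opNorm2 A = ‖A‖ := rfl

theorem trace_difference_L1_bound_general (β : ℝ)
    (B : AddCircle (1:ℝ) → Matrix (Fin 2) (Fin 2) ℂ)
    (hBmeas : ∀ i j, Measurable fun x => B x i j)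
    (hBL2 : MeasureTheory.MemLp (fun x => opNorm2 (B x)) 2 volume)
    (d : ℂ)
    (hdet : ∀ᵐ x ∂(volume : Measure (AddCircle (1:ℝ))), (B x).det = d)
    (D : Matrix (Fin 2) (Fin 2) ℂ) (hDu : D.conjTranspose * D = 1)
    (k : ℕ) :
    (∫ x : AddCircle (1:ℝ),
        ‖
          (Matrix.trace (B (x + (((k : ℝ) * β : ℝ) : AddCircle (1:ℝ))) * D ^ k * (B x)⁻¹) -
            Matrix.trace (B x * D ^ k * (B x)⁻¹))‖) ^ 2 ≤
      4 / ‖d‖ ^ 2 *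
        (∫ x : AddCircle (1:ℝ),
          opNorm2 (B (x + (((k : ℝ) * β : ℝ) : AddCircle (1:ℝ))) - B x) ^ 2) *
        (∫ x : AddCircle (1:ℝ), opNorm2 (B x) ^ 2) := by
  set c : AddCircle (1:ℝ) := (((k : ℝ) * β : ℝ) : AddCircle (1:ℝ))
  simp only [opNorm2_eq_l2_opNorm] at hBL2 ⊢
  have hshift : MeasurePreserving (· + c) volume volume := measurePreserving_add_right volume c
  have hdiff : MemLp (fun x => ‖B (x + c) - B x‖) 2 volume :=
    memLp_norm_comp_sub hshift hBL2 <| Matrix.measurable_l2_opNorm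
      (fun i j => ((hBmeas i j).comp hshift.measurable).sub (hBmeas i j)) |>.aestronglyMeasurable
  have hDk : ‖D ^ k‖ ≤ 1 :=
    (CStarRing.norm_of_mem_unitary (pow_mem (Matrix.mem_unitaryGroup_iff'.mpr hDu) k)).le
  have hpointwise : ∀ᵐ x ∂(volume : Measure (AddCircle (1:ℝ))),
      ‖(B (x + c) * D ^ k * (B x)⁻¹).trace - (B x * D ^ k * (B x)⁻¹).trace‖ ≤
        2 / ‖d‖ * (‖B (x + c) - B x‖ * ‖B x‖) := by
    filter_upwards [hdet] with x hx
    exact hx ▸ Matrix.norm_trace_mul_inv_sub_le_fin_two _ _ _ hDk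
  have h := sq_integral_norm_le_of_le_mul (.of_forall fun x => norm_nonneg _)
    (.of_forall fun x => norm_nonneg _) hdiff hBL2 hpointwise
  rwa [div_pow, show (2 : ℝ) ^ 2 = 4 by norm_num] at h

theorem trace_difference_L1_bound (β : ℝ)
    (B : AddCircle (1:ℝ) → Matrix (Fin 2) (Fin 2) ℂ)
    (hBmeas : ∀ i j, Measurable fun x => B x i j)
    (hBL2 : MeasureTheory.MemLp (fun x => opNorm2 (B x)) 2 volume)
    (d : ℂ) (hd : d ≠ 0)
    (hdet : ∀ᵐ x ∂(volume : Measure (AddCircle (1:ℝ))), (B x).det = d)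
    (D : Matrix (Fin 2) (Fin 2) ℂ) (hDu : D.conjTranspose * D = 1) (hDdiag : D.IsDiag)
    (k : ℕ) :
    (∫ x : AddCircle (1:ℝ),
        ‖
          (Matrix.trace (B (x + (((k : ℝ) * β : ℝ) : AddCircle (1:ℝ))) * D ^ k * (B x)⁻¹) -
            Matrix.trace (B x * D ^ k * (B x)⁻¹))‖) ^ 2 ≤
      4 / ‖d‖ ^ 2 *
        (∫ x : AddCircle (1:ℝ),
          opNorm2 (B (x + (((k : ℝ) * β : ℝ) : AddCircle (1:ℝ))) - B x) ^ 2) *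
        (∫ x : AddCircle (1:ℝ), opNorm2 (B x) ^ 2) :=
  trace_difference_L1_bound_general β B hBmeas hBL2 d hdet D hDu k
end

section
/- Fix z ∈ ℂ with |z| = 1, β ∈ ℝ, and θ ∈ ℝ. For k a positive even integer, the function tr N_k^z(x), where N_k^z(x) = N^z(x + (k−1)β) ⋯ N^z(x + β) N^z(x) and N^z(x) = [[−2iz⁻¹, 2i sin(2πx)],[2i sin(2πx), −2iz]], is a trigonometric polynomial of degree at most k in x, and its Fourier coefficient c_k (the coefficient of e^{2πikx}) equals 2 e^{πik(k−1)β}. -/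
/-!
Writing `2i sin θ = e^{iθ} - e^{-iθ}`, the factor `N^z(x + jβ)` is a Laurent polynomial of
degree one in `e^{2πix}` with matrix coefficients, whose top coefficient is `e^{2πijβ} S` for the
swap matrix `S`. Supports of Laurent polynomials add under multiplication, so the product of `k`
factors has degree at most `k` and its top coefficient is the product of the top coefficients,
`e^{πik(k-1)β} S^k`. For even `k`, `S^k = 1`, whose trace is `2`.
-/

/-- The (renormalized) cocycle map of the unitary almost-Mathieu operator,
with complexified phase `w`. -/
noncomputable def Nmat (z : ℂ) (w : ℂ) : Matrix (Fin 2) (Fin 2) ℂ :=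
  !![-2 * Complex.I * z⁻¹, 2 * Complex.I * Complex.sin (2 * Real.pi * w);
     2 * Complex.I * Complex.sin (2 * Real.pi * w), -2 * Complex.I * z]

open Finset AddMonoidAlgebra Complex
open scoped Pointwise

namespace AddMonoidAlgebra

variable {R : Type*} [Semiring R]

theorem support_coeff_mul_subset_Icc {f g : R[ℤ]} {m n : ℤ}
    (hf : f.coeff.support ⊆ Icc (-m) m) (hg : g.coeff.support ⊆ Icc (-n) n) :
    (f * g).coeff.support ⊆ Icc (-(m + n)) (m + n) := by
  classical
  calc (f * g).coeff.support ⊆ f.coeff.support + g.coeff.support := support_coeff_mul_subset f g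
    _ ⊆ Icc (-m) m + Icc (-n) n := add_subset_add hf hg
    _ ⊆ Icc (-m + -n) (m + n) := Icc_add_Icc_subset _ _ _ _
    _ = Icc (-(m + n)) (m + n) := by rw [neg_add]

theorem coeff_mul_add_of_support_subset_Icc {f g : R[ℤ]} {m n : ℤ}
    (hf : f.coeff.support ⊆ Icc (-m) m) (hg : g.coeff.support ⊆ Icc (-n) n) :
    (f * g).coeff (m + n) = f.coeff m * g.coeff n := by
  refine coeff_mul_add_of_uniqueAdd fun a b ha hb hab => ?_
  have ha := mem_Icc.mp (hf ha)
  have hb := mem_Icc.mp (hg hb)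
  omega

variable {l : List R[ℤ]} (hl : ∀ f ∈ l, f.coeff.support ⊆ Icc (-1) 1)
include hl

theorem support_coeff_list_prod_subset_Icc :
    l.prod.coeff.support ⊆ Icc (-(l.length : ℤ)) l.length := by
  induction l with
  | nil =>
    rw [List.prod_nil, AddMonoidAlgebra.one_def, coeff_single]
    exact Finsupp.support_single_subset.trans (by simp)
  | cons f l ih =>
    simp only [List.forall_mem_cons] at hl
    simpa [add_comm] using support_coeff_mul_subset_Icc hl.1 (ih hl.2)

theorem coeff_list_prod_length : l.prod.coeff l.length = (l.map (·.coeff 1)).prod := by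
  induction l with
  | nil => simp
  | cons f l ih =>
    simp only [List.forall_mem_cons] at hl
    rw [List.prod_cons, List.length_cons, Nat.cast_succ, add_comm,
      coeff_mul_add_of_support_subset_Icc hl.1 (support_coeff_list_prod_subset_Icc hl.2),
      ih hl.2, List.map_cons, List.prod_cons]

end AddMonoidAlgebra

theorem List.prod_map_smul_const {ι S A : Type*} [CommMonoid S] [Monoid A] [MulAction S A]
    [IsScalarTower S A A] [SMulCommClass S A A] (l : List ι) (a : ι → S) (M : A) :
    (l.map fun i => a i • M).prod = (l.map a).prod • M ^ l.length := by
  induction l with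
  | nil => simp
  | cons i l ih =>
    rw [List.map_cons, List.prod_cons, ih, smul_mul_smul_comm, List.map_cons, List.prod_cons,
      List.length_cons, pow_succ']

theorem list_prod_map_range_exp (k : ℕ) (β : ℂ) :
    ((List.range k).map fun j : ℕ => exp (2 * Real.pi * I * (j * β))).prod =
      exp (Real.pi * I * k * (k - 1) * β) := by
  induction k with
  | zero => simp
  | succ k ih =>
    rw [List.range_succ, List.map_append, List.prod_append, ih, List.map_singleton,
      List.prod_singleton, ← exp_add]
    push_cast
    ring_nf

section CircleEvaluation

variable {A : Type*} [Semiring A] [Algebra ℂ A]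

noncomputable def circleChar (x : ℝ) : Multiplicative ℤ →* ℂ where
  toFun n := exp (2 * Real.pi * I * (n.toAdd : ℂ) * x)
  map_one' := by simp
  map_mul' a b := by
    rw [← exp_add]
    push_cast [toAdd_mul]
    ring_nf

/-- Evaluation at `e^{2πix}`, reading `A[ℤ]` as Laurent polynomials with coefficients in `A`. -/
noncomputable def evalCircle (x : ℝ) : A[ℤ] →+* A :=
  liftNCRingHom (RingHom.id A) ((algebraMap ℂ A : ℂ →* A).comp (circleChar x))
    fun a _ => (Algebra.commutes _ a).symm

theorem evalCircle_single (x : ℝ) (n : ℤ) (a : A) :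
    evalCircle x (single n a) = exp (2 * Real.pi * I * n * x) • a := by
  rw [Algebra.smul_def, Algebra.commutes]
  exact liftNCRingHom_single ..

theorem evalCircle_eq_sum_of_support_subset (x : ℝ) {f : A[ℤ]} {s : Finset ℤ}
    (hs : f.coeff.support ⊆ s) :
    evalCircle x f = ∑ n ∈ s, exp (2 * Real.pi * I * n * x) • f.coeff n := by
  conv_lhs => rw [← sum_coeff_single f]
  rw [map_finsuppSum, Finsupp.sum_of_support_subset _ hs]
  · simp only [evalCircle_single]
  · simp

end CircleEvaluation

def swapMat : Matrix (Fin 2) (Fin 2) ℂ := !![0, 1; 1, 0]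

noncomputable def diagMat (z : ℂ) : Matrix (Fin 2) (Fin 2) ℂ :=
  !![-2 * I * z⁻¹, 0; 0, -2 * I * z]

theorem swapMat_pow_of_even {k : ℕ} (hk : Even k) : swapMat ^ k = 1 := by
  have hsq : swapMat * swapMat = 1 := by simp [swapMat, Matrix.one_fin_two]
  obtain ⟨n, rfl⟩ := hk
  rw [← two_mul, pow_mul, sq, hsq, one_pow]

noncomputable def NmatLaurent (z t : ℂ) : (Matrix (Fin 2) (Fin 2) ℂ)[ℤ] :=
  single 1 (exp (2 * Real.pi * I * t) • swapMat) + single 0 (diagMat z) +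
    single (-1) (-exp (-(2 * Real.pi * I * t)) • swapMat)

theorem support_coeff_NmatLaurent_subset (z t : ℂ) :
    (NmatLaurent z t).coeff.support ⊆ Icc (-1) 1 := by
  intro n hn
  rw [mem_Icc]
  by_contra hn'
  refine Finsupp.mem_support_iff.mp hn ?_
  simp only [NmatLaurent, coeff_add, coeff_single, Finsupp.add_apply, Finsupp.single_apply]
  rw [if_neg (by omega), if_neg (by omega), if_neg (by omega), add_zero, add_zero]

theorem coeff_NmatLaurent_one (z t : ℂ) :
    (NmatLaurent z t).coeff 1 = exp (2 * Real.pi * I * t) • swapMat := by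
  simp only [NmatLaurent, coeff_add, coeff_single, Finsupp.add_apply, Finsupp.single_apply]
  norm_num

theorem two_mul_I_mul_sin (θ : ℂ) : 2 * I * sin θ = exp (θ * I) - exp (-θ * I) := by
  rw [mul_right_comm, two_sin, mul_assoc, I_mul_I]
  ring

theorem evalCircle_NmatLaurent (z t : ℂ) (x : ℝ) :
    evalCircle x (NmatLaurent z t) = Nmat z (x + t) := by
  have hsin : 2 * I * sin (2 * Real.pi * (x + t)) =
      exp (2 * Real.pi * I * x + 2 * Real.pi * I * t) +
        -exp (-(2 * Real.pi * I * x) + -(2 * Real.pi * I * t)) := by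
    rw [two_mul_I_mul_sin]
    ring_nf
  simp only [NmatLaurent, map_add, evalCircle_single, smul_smul, neg_smul, smul_neg, ← exp_add]
  ext i j
  fin_cases i <;> fin_cases j <;> simp [swapMat, diagMat, Nmat, hsin]

theorem trace_Nk_top_fourier_coefficient_general (z : ℂ) (β : ℝ)
    (k : ℕ) (hke : Even k) :
    ∃ c : ℤ → ℂ,
      (∀ x : ℝ,
        Matrix.trace
            (((List.range k).reverse.map (fun j => Nmat z ((x : ℂ) + (j : ℂ) * (β : ℂ)))).prod) =
          ∑ j ∈ Finset.Icc (-(k : ℤ)) (k : ℤ),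
            c j * Complex.exp (2 * Real.pi * Complex.I * (j : ℂ) * (x : ℂ))) ∧
      c k = 2 * Complex.exp (Real.pi * Complex.I * (k : ℂ) * ((k : ℂ) - 1) * (β : ℂ)) := by
  -- `(j : ℂ)` makes the statement coerce `List.range k` to a `List ℂ` through the list monad.
  simp only [List.pure_def, List.bind_eq_flatMap, ← List.map_eq_flatMap, List.map_map,
    Function.comp_def]
  set l := (List.range k).reverse.map fun j : ℕ => NmatLaurent z (j * β)
  have hl : ∀ f ∈ l, f.coeff.support ⊆ Icc (-1) 1 := by
    simp only [l, List.mem_map]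
    rintro _ ⟨j, -, rfl⟩
    exact support_coeff_NmatLaurent_subset _ _
  have hlen : l.length = k := by simp [l]
  refine ⟨fun j => (l.prod.coeff j).trace, fun x => ?_, ?_⟩
  · have heval : ((List.range k).reverse.map fun j : ℕ => Nmat z (x + j * β)).prod =
        evalCircle x l.prod := by
      simp only [l, map_list_prod, List.map_map, Function.comp_def, evalCircle_NmatLaurent]
    have hsupp := hlen ▸ support_coeff_list_prod_subset_Icc hl
    rw [heval, evalCircle_eq_sum_of_support_subset x hsupp, Matrix.trace_sum]
    simp only [Matrix.trace_smul, smul_eq_mul, mul_comm]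
  · calc (l.prod.coeff k).trace
        = (((List.range k).reverse.map fun j : ℕ => exp (2 * Real.pi * I * (j * β))).prod •
            swapMat ^ k).trace := by
          rw [← hlen, coeff_list_prod_length hl, List.map_map, hlen]
          simp only [Function.comp_def, coeff_NmatLaurent_one]
          rw [List.prod_map_smul_const, List.length_reverse, List.length_range]
      _ = 2 * exp (Real.pi * I * k * (k - 1) * β) := by
          rw [List.map_reverse, List.prod_reverse, list_prod_map_range_exp,
            swapMat_pow_of_even hke, Matrix.trace_smul, Matrix.trace_one]
          simp [mul_comm]

theorem trace_Nk_top_fourier_coefficient (z : ℂ) (hz : ‖z‖ = 1) (β : ℝ)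
    (k : ℕ) (hk : 0 < k) (hke : Even k) :
    ∃ c : ℤ → ℂ,
      (∀ x : ℝ,
        Matrix.trace
            (((List.range k).reverse.map (fun j => Nmat z ((x : ℂ) + (j : ℂ) * (β : ℂ)))).prod) =
          ∑ j ∈ Finset.Icc (-(k : ℤ)) (k : ℤ),
            c j * Complex.exp (2 * Real.pi * Complex.I * (j : ℂ) * (x : ℂ))) ∧
      c k = 2 * Complex.exp (Real.pi * Complex.I * (k : ℂ) * ((k : ℂ) - 1) * (β : ℂ)) :=
  trace_Nk_top_fourier_coefficient_general z β k hke
end
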